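/- Let (a_l)_{l≥1} be a sequence of real numbers satisfying a₁ = 1, a_{2N} = a_N/2 and a_{2N+1} = a_{N+1} for all N ≥ 1. Then a_l = 2^{1 − σ₁(l) − p(l)} for all l ≥ 1, where σ₁(l) is the number of ones in the binary expansion of l and p(l) is the largest power p such that 2^p divides l. -/
import Mathlib


/-- number of ones in the binary expansion -/
def sigma1 (k : ℕ) : ℕ := (Nat.digits 2 k).count 1

/-- 2-adic valuation -/
def p2 (k : ℕ) : ℕ := padicValNat 2 k

lemma sigma1_two_mul (N : ℕ) (h : N ≠ 0) : sigma1 (2 * N) = sigma1 N := by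
  unfold sigma1
  rw [Nat.digits_def' (by norm_num : 1 < 2) (by positivity), Nat.mul_mod_right,
    Nat.mul_div_cancel_left _ (by norm_num)]
  simp

lemma sigma1_two_mul_add_one (N : ℕ) : sigma1 (2 * N + 1) = sigma1 N + 1 := by
  unfold sigma1
  rw [Nat.digits_def' (by norm_num : 1 < 2) (by omega)]
  have h1 : (2 * N + 1) % 2 = 1 := by omega
  have h2 : (2 * N + 1) / 2 = N := by omega
  rw [h1, h2]
  simp [Nat.add_comm]

lemma p2_two_mul (N : ℕ) (h : N ≠ 0) : p2 (2 * N) = p2 N + 1 := by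
  unfold p2
  rw [padicValNat.mul (by norm_num) h, padicValNat.self (by norm_num)]
  omega

lemma p2_two_mul_add_one (N : ℕ) : p2 (2 * N + 1) = 0 := by
  unfold p2
  exact padicValNat.eq_zero_of_not_dvd (by omega)

lemma key : ∀ N : ℕ, sigma1 (N + 1) + p2 (N + 1) = sigma1 N + 1 := by
  intro N
  induction N using Nat.strong_induction_on with
  | _ N ih =>
    rcases Nat.even_or_odd N with ⟨M, hM⟩ | ⟨M, hM⟩
    · subst hM
      rcases Nat.eq_zero_or_pos M with rfl | hM0
      · simp [sigma1, p2]
      · rw [show M + M = 2 * M by ring, sigma1_two_mul_add_one, p2_two_mul_add_one,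
          sigma1_two_mul M (by omega)]
    · subst hM
      have : 2 * M + 1 + 1 = 2 * (M + 1) := by ring
      rw [this, sigma1_two_mul (M + 1) (by omega), p2_two_mul (M + 1) (by omega),
        sigma1_two_mul_add_one]
      have := ih M (by omega)
      omega

theorem a_eq_two_zpow (a : ℕ → ℝ) (h1 : a 1 = 1)
    (heven : ∀ N : ℕ, 1 ≤ N → a (2 * N) = a N / 2)
    (hodd : ∀ N : ℕ, 1 ≤ N → a (2 * N + 1) = a (N + 1)) :
    ∀ l : ℕ, 1 ≤ l → a l = (2 : ℝ) ^ ((1 : ℤ) - sigma1 l - p2 l) := by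
  intro l
  induction l using Nat.strong_induction_on with
  | _ l ih =>
    intro hl
    rcases eq_or_lt_of_le hl with h | h
    · rw [← h]
      have hs : sigma1 1 = 1 := by simp [sigma1]
      have hp : p2 1 = 0 := by simp [p2]
      rw [h1, hs, hp]
      norm_num
    · rcases Nat.even_or_odd l with ⟨M, hM⟩ | ⟨M, hM⟩
      · have hM1 : 1 ≤ M := by omega
        have hl2 : l = 2 * M := by omega
        subst hl2
        rw [heven M hM1, ih M (by omega) hM1, sigma1_two_mul M (by omega),
          p2_two_mul M (by omega)]
        push_cast
        rw [div_eq_mul_inv, ← zpow_neg_one, ← zpow_add₀ (by norm_num : (2:ℝ) ≠ 0)]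
        ring_nf
      · have hM1 : 1 ≤ M := by omega
        subst hM
        rw [hodd M hM1, ih (M + 1) (by omega) (by omega), sigma1_two_mul_add_one,
          p2_two_mul_add_one]
        have hk := key M
        congr 1
        push_cast
        omega
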